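/- Let κ_1, …, κ_{m+1} : ℝ^n → ℝ and ψ_1, …, ψ_{m+1} : ℝ^n → ℝ^D be functions, and let ε ≥ 0. Suppose that for every i and all x, x' ∈ ℝ^n, |κ_i(x − x') − ψ_i(x)ᵀψ_i(x')| ≤ ε, and that for all i ≠ j and all x, x' ∈ ℝ^n, |κ_i(x) κ_j(x') − ψ_i(x)ᵀψ_j(x')| ≤ ε. Let k_d be the AD compound kernel of κ_1, …, κ_{m+1} and φ_d the AD compound basis of ψ_1, …, ψ_{m+1}. Then for all x, x' ∈ ℝ^n and u, u' ∈ ℝ^m, |k_d((x,u),(x',u')) − φ_d(x,u)ᵀφ_d(x',u')| ≤ ε (‖u‖_1 + 1)(‖u'‖_1 + 1), where ‖u‖_1 = ∑_{i=1}^m |u_i|. -/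
import Mathlib


open Matrix

/-- The Affine Dense (AD) compound basis of `ψ 0, …, ψ m`:
`φ_d(x, u) = ∑_{i=1}^m uᵢ ψᵢ(x) + ψ_{m+1}(x) ∈ ℝ^D`. -/
def adBasis {n m D : ℕ} (ψ : Fin (m + 1) → (Fin n → ℝ) → (Fin D → ℝ))
    (x : Fin n → ℝ) (u : Fin m → ℝ) : Fin D → ℝ :=
  (∑ i : Fin m, u i • ψ i.castSucc x) + ψ (Fin.last m) x

/-- The Affine Dense (AD) compound kernel of `κ 0, …, κ m`: writing `y = (u, 1)` and
`y' = (u', 1)`,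
`k_d((x,u),(x',u')) = ∑ᵢ yᵢ yᵢ' κᵢ(x - x') + ∑_{i ≠ j} yᵢ yⱼ' κᵢ(x) κⱼ(x')`. -/
def adKernel {n m : ℕ} (κ : Fin (m + 1) → (Fin n → ℝ) → ℝ)
    (x x' : Fin n → ℝ) (u u' : Fin m → ℝ) : ℝ :=
  (∑ i : Fin (m + 1),
      Fin.snoc (α := fun _ => ℝ) u 1 i * Fin.snoc (α := fun _ => ℝ) u' 1 i * κ i (x - x')) +
    ∑ i : Fin (m + 1), ∑ j : Fin (m + 1),
      if i ≠ j then
        Fin.snoc (α := fun _ => ℝ) u 1 i * Fin.snoc (α := fun _ => ℝ) u' 1 j * κ i x * κ j x'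
      else 0

/-- if `|κᵢ(x - x') - ψᵢ(x)ᵀψᵢ(x')| ≤ ε` for all `i`, and
`|κᵢ(x) κⱼ(x') - ψᵢ(x)ᵀψⱼ(x')| ≤ ε` for all `i ≠ j`, then the AD compound
approximation satisfies
`|k_d((x,u),(x',u')) - φ_d(x,u)ᵀφ_d(x',u')| ≤ ε (‖u‖₁ + 1)(‖u'‖₁ + 1)`,
where `‖u‖₁ = ∑ᵢ |uᵢ|`. -/
theorem stmt_10 {n m D : ℕ} (κ : Fin (m + 1) → (Fin n → ℝ) → ℝ)
    (ψ : Fin (m + 1) → (Fin n → ℝ) → (Fin D → ℝ)) (ε : ℝ) (hε : 0 ≤ ε)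
    (happrox : ∀ (i : Fin (m + 1)) (x x' : Fin n → ℝ),
        |κ i (x - x') - ψ i x ⬝ᵥ ψ i x'| ≤ ε)
    (hcross : ∀ (i j : Fin (m + 1)), i ≠ j → ∀ (x x' : Fin n → ℝ),
        |κ i x * κ j x' - ψ i x ⬝ᵥ ψ j x'| ≤ ε)
    (x x' : Fin n → ℝ) (u u' : Fin m → ℝ) :
    |adKernel κ x x' u u' - adBasis ψ x u ⬝ᵥ adBasis ψ x' u'|
      ≤ ε * ((∑ i : Fin m, |u i|) + 1) * ((∑ i : Fin m, |u' i|) + 1) := by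
  set f : Fin (m+1) → ℝ := Fin.snoc u 1 with hf
  set g : Fin (m+1) → ℝ := Fin.snoc u' 1 with hg
  have hbasis : ∀ (v : Fin m → ℝ) (z : Fin n → ℝ),
      adBasis ψ z v = ∑ i : Fin (m+1), Fin.snoc (α := fun _ => ℝ) v 1 i • ψ i z := by
    intro v z
    rw [Fin.sum_univ_castSucc]
    simp [adBasis]
  have expand : adBasis ψ x u ⬝ᵥ adBasis ψ x' u' =
      ∑ i : Fin (m+1), ∑ j : Fin (m+1), f i * g j * (ψ i x ⬝ᵥ ψ j x') := by
    rw [hbasis u x, hbasis u' x']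
    simp only [dotProduct, Finset.sum_apply, Pi.smul_apply, smul_eq_mul, Finset.sum_mul,
      Finset.mul_sum]
    rw [Finset.sum_comm (γ := Fin D) (α := Fin (m+1))]
    conv_rhs => rw [Finset.sum_comm (γ := Fin (m+1)) (α := Fin (m+1))]
    refine Finset.sum_congr rfl fun j _ => ?_
    rw [Finset.sum_comm (γ := Fin D) (α := Fin (m+1))]
    exact Finset.sum_congr rfl fun i _ => Finset.sum_congr rfl fun d _ => by ring
  have kexp : adKernel κ x x' u u' =
      ∑ i : Fin (m+1), ∑ j : Fin (m+1),
        f i * g j * (if i = j then κ i (x - x') else κ i x * κ j x') := by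
    rw [adKernel, ← Finset.sum_add_distrib]
    refine Finset.sum_congr rfl fun i _ => ?_
    have h1 : f i * g i * κ i (x - x') =
        ∑ j : Fin (m+1), if i = j then f i * g j * κ i (x - x') else 0 := by
      rw [Finset.sum_ite_eq (Finset.univ) i (fun j => f i * g j * κ i (x - x'))]
      simp
    rw [h1, ← Finset.sum_add_distrib]
    refine Finset.sum_congr rfl fun j _ => ?_
    by_cases h : i = j <;> simp [h] <;> ring
  have key : adKernel κ x x' u u' - adBasis ψ x u ⬝ᵥ adBasis ψ x' u' =
      ∑ i : Fin (m+1), ∑ j : Fin (m+1),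
        f i * g j * ((if i = j then κ i (x - x') else κ i x * κ j x') - ψ i x ⬝ᵥ ψ j x') := by
    rw [kexp, expand, ← Finset.sum_sub_distrib]
    refine Finset.sum_congr rfl fun i _ => ?_
    rw [← Finset.sum_sub_distrib]
    refine Finset.sum_congr rfl fun j _ => ?_
    ring
  rw [key]
  have habs : ∀ i j : Fin (m+1),
      |f i * g j * ((if i = j then κ i (x - x') else κ i x * κ j x') - ψ i x ⬝ᵥ ψ j x')|
        ≤ |f i| * |g j| * ε := by
    intro i j
    rw [abs_mul, abs_mul]
    refine mul_le_mul_of_nonneg_left ?_ (by positivity)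
    by_cases h : i = j
    · subst h; simpa using happrox i x x'
    · simpa [h] using hcross i j h x x'
  calc |∑ i : Fin (m+1), ∑ j : Fin (m+1),
        f i * g j * ((if i = j then κ i (x - x') else κ i x * κ j x') - ψ i x ⬝ᵥ ψ j x')|
      ≤ ∑ i : Fin (m+1), ∑ j : Fin (m+1), |f i| * |g j| * ε := by
        refine (Finset.abs_sum_le_sum_abs _ _).trans ?_
        refine Finset.sum_le_sum fun i _ => ?_
        exact (Finset.abs_sum_le_sum_abs _ _).trans (Finset.sum_le_sum fun j _ => habs i j)
    _ = ε * ((∑ i : Fin m, |u i|) + 1) * ((∑ i : Fin m, |u' i|) + 1) := by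
        have hfs : ∑ i : Fin (m+1), |f i| = (∑ i : Fin m, |u i|) + 1 := by
          rw [Fin.sum_univ_castSucc]; simp [hf]
        have hgs : ∑ i : Fin (m+1), |g i| = (∑ i : Fin m, |u' i|) + 1 := by
          rw [Fin.sum_univ_castSucc]; simp [hg]
        rw [← hfs, ← hgs, mul_assoc, Finset.sum_mul_sum, Finset.mul_sum]
        refine Finset.sum_congr rfl fun i _ => ?_
        rw [Finset.mul_sum]
        exact Finset.sum_congr rfl fun j _ => by ring
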